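/- arXiv:2311.09968 — 7 statements merged into one kernel-verified Lean document; each statement's English description precedes it below -/
import Mathlib

section
/- Let f : ℝⁿ → ℝ be continuously differentiable and let p be a critical point of f. Then p is the unique minimum of f on the stable set of p: if γ : [0,∞) → ℝⁿ is a gradient flow of f with γ(0) = x, lim_{t→∞} γ(t) = p, and x ≠ p, then f(x) > f(p). -/
open Filter

/-- A critical point `p` is the unique minimum of `f` on its stable set:
if a gradient flow starting at `x ≠ p` converges to `p`, then `f x > f p`. -/
theorem critical_point_unique_min_on_stable_set
    (n : ℕ) (f : EuclideanSpace ℝ (Fin n) → ℝ)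
    (hf : ContDiff ℝ 1 f)
    (p x : EuclideanSpace ℝ (Fin n))
    (hcrit : gradient f p = 0)
    (γ : ℝ → EuclideanSpace ℝ (Fin n))
    (hγ : ∀ t : ℝ, 0 ≤ t → HasDerivAt γ (-(gradient f (γ t))) t)
    (hstart : γ 0 = x)
    (hlim : Tendsto γ atTop (nhds p))
    (hne : x ≠ p) :
    f x > f p := by
  set F : ℝ → ℝ := fun t => f (γ t) with hFdef
  have hdiff : Differentiable ℝ f := hf.differentiable one_ne_zero
  -- Derivative of F
  have hFderiv : ∀ t : ℝ, 0 ≤ t →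
      HasDerivAt F (-(‖gradient f (γ t)‖ ^ 2)) t := by
    intro t ht
    have hg : HasGradientAt f (gradient f (γ t)) (γ t) :=
      (hdiff (γ t)).hasGradientAt
    have := hg.hasFDerivAt.comp_hasDerivAt t (hγ t ht)
    have heq : (InnerProductSpace.toDual ℝ (EuclideanSpace ℝ (Fin n))
        (gradient f (γ t))) (-(gradient f (γ t))) = -(‖gradient f (γ t)‖ ^ 2) := by
      rw [InnerProductSpace.toDual_apply_apply, inner_neg_right,
        real_inner_self_eq_norm_sq]
    rw [heq] at this
    exact this
  -- F is antitone on [0, ∞)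
  have hFcont : ContinuousOn F (Set.Ici 0) := fun t ht =>
    ((hFderiv t ht).continuousAt).continuousWithinAt
  have hFanti : AntitoneOn F (Set.Ici (0:ℝ)) := by
    apply antitoneOn_of_deriv_nonpos (convex_Ici 0) hFcont
    · intro t ht
      rw [interior_Ici] at ht
      exact ((hFderiv t ht.le).differentiableAt).differentiableWithinAt
    · intro t ht
      rw [interior_Ici] at ht
      rw [(hFderiv t ht.le).deriv]
      simpa using sq_nonneg ‖gradient f (γ t)‖
  have hFlim : Tendsto F atTop (nhds (f p)) :=
    ((hdiff p).continuousAt.tendsto).comp hlim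
  -- F t ≥ f p for all t ≥ 0
  have hge : ∀ t : ℝ, 0 ≤ t → f p ≤ F t := by
    intro t ht
    refine le_of_tendsto hFlim ?_
    filter_upwards [eventually_ge_atTop t] with s hs
    exact hFanti ht (ht.trans hs) hs
  have h0 : f p ≤ f x := by simpa [hFdef, hstart] using hge 0 le_rfl
  rcases lt_or_eq_of_le h0 with h | h
  · exact h
  -- Equality case: derive contradiction
  exfalso
  have hconst : ∀ t : ℝ, 0 ≤ t → F t = f p := by
    intro t ht
    refine le_antisymm ?_ (hge t ht)
    have := hFanti (Set.self_mem_Ici) ht ht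
    simpa [hFdef, hstart, ← h] using this
  -- gradient vanishes along the flow
  have hgradzero : ∀ t : ℝ, 0 ≤ t → gradient f (γ t) = 0 := by
    intro t ht
    have h1 : HasDerivWithinAt F (-(‖gradient f (γ t)‖ ^ 2)) (Set.Ici t) t :=
      (hFderiv t ht).hasDerivWithinAt
    have h2 : HasDerivWithinAt F 0 (Set.Ici t) t := by
      apply (hasDerivWithinAt_const t (Set.Ici t) (f p)).congr
      · intro s hs; exact hconst s (ht.trans hs)
      · exact hconst t ht
    have hu : UniqueDiffWithinAt ℝ (Set.Ici t) t := uniqueDiffOn_Ici t t Set.self_mem_Ici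
    have := h1.derivWithin hu
    rw [h2.derivWithin hu] at this
    have : ‖gradient f (γ t)‖ ^ 2 = 0 := by linarith [this]
    simpa [pow_eq_zero_iff] using this
  -- γ is constant on [0, ∞)
  have hγconst : ∀ t : ℝ, 0 ≤ t → γ t = x := by
    intro t ht
    have hcont : ContinuousOn γ (Set.Icc 0 t) := fun s hs =>
      ((hγ s hs.1).continuousAt).continuousWithinAt
    have hderiv0 : ∀ s ∈ Set.Ico (0:ℝ) t, HasDerivWithinAt γ 0 (Set.Ici s) s := by
      intro s hs
      have := hγ s hs.1
      rw [hgradzero s hs.1, neg_zero] at this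
      exact this.hasDerivWithinAt
    have := constant_of_has_deriv_right_zero hcont hderiv0 t (Set.right_mem_Icc.2 ht)
    rw [this, hstart]
  have : Tendsto γ atTop (nhds x) := by
    apply tendsto_const_nhds.congr'
    filter_upwards [eventually_ge_atTop (0:ℝ)] with s hs
    exact (hγconst s hs).symm
  exact hne (tendsto_nhds_unique this hlim)
end

section
/- Let f : ℝⁿ → ℝ be continuously differentiable and let γ : ℝ → ℝⁿ be a gradient flow of f such that lim_{t→∞} γ(t) = p and lim_{t→−∞} γ(t) = p for the same point p. Then γ is constant: γ(t) = p for all t ∈ ℝ. (Equivalently, for a critical point p, the intersection W(p,p) of the unstable and stable sets of p equals {p}.) -/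
open Filter

/-- A gradient flow converging to the same point `p` both as `t → ∞` and
as `t → −∞` is constant equal to `p` (i.e. `W(p,p) = {p}`). -/
theorem gradient_flow_homoclinic_is_constant
    (n : ℕ) (f : EuclideanSpace ℝ (Fin n) → ℝ)
    (hf : ContDiff ℝ 1 f)
    (p : EuclideanSpace ℝ (Fin n))
    (γ : ℝ → EuclideanSpace ℝ (Fin n))
    (hγ : ∀ t : ℝ, HasDerivAt γ (-(gradient f (γ t))) t)
    (hlim_top : Tendsto γ atTop (nhds p))
    (hlim_bot : Tendsto γ atBot (nhds p)) :
    ∀ t : ℝ, γ t = p := by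
  have hfd : Differentiable ℝ f := hf.differentiable one_ne_zero
  -- derivative of g = f ∘ γ
  have hg : ∀ t : ℝ, HasDerivAt (fun t => f (γ t))
      (-(‖gradient f (γ t)‖ ^ 2)) t := by
    intro t
    have h1 : HasGradientAt f (gradient f (γ t)) (γ t) :=
      (hfd (γ t)).hasGradientAt
    have h2 := h1.hasFDerivAt.comp_hasDerivAt t (hγ t)
    convert h2 using 1
    case e'_9 =>
      rw [InnerProductSpace.toDual_apply_apply, inner_neg_right, real_inner_self_eq_norm_sq]
    all_goals rfl
  have hganti : Antitone (fun t => f (γ t)) := by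
    apply antitone_of_deriv_nonpos
    · exact fun t => (hg t).differentiableAt
    · intro t
      rw [(hg t).deriv]
      simp [sq_nonneg]
  have hcf : Continuous f := hf.continuous
  have htop : Tendsto (fun t => f (γ t)) atTop (nhds (f p)) :=
    (hcf.tendsto p).comp hlim_top
  have hbot : Tendsto (fun t => f (γ t)) atBot (nhds (f p)) :=
    (hcf.tendsto p).comp hlim_bot
  -- g is constant equal to f p
  have hgconst : ∀ t : ℝ, f (γ t) = f p := by
    intro t
    have h1 : f p ≤ f (γ t) :=
      le_of_tendsto htop ((eventually_ge_atTop t).mono fun s hs => hganti hs)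
    have h2 : f (γ t) ≤ f p :=
      ge_of_tendsto hbot ((eventually_le_atBot t).mono fun s hs => hganti hs)
    linarith
  -- hence gradient along γ is zero
  have hgrad0 : ∀ t : ℝ, gradient f (γ t) = 0 := by
    intro t
    have h0 : HasDerivAt (fun t => f (γ t)) 0 t := by
      have : (fun t : ℝ => f (γ t)) = fun _ => f p := funext hgconst
      rw [this]; exact hasDerivAt_const t (f p)
    have := h0.unique (hg t)
    have hn : ‖gradient f (γ t)‖ ^ 2 = 0 := by linarith
    have : ‖gradient f (γ t)‖ = 0 := by nlinarith [norm_nonneg (gradient f (γ t))]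
    exact norm_eq_zero.mp this
  -- γ has zero derivative, so γ is constant
  have hγconst : ∀ t : ℝ, γ t = γ 0 := by
    intro t
    have hd : ∀ s : ℝ, HasDerivAt γ 0 s := by
      intro s; have := hγ s; rwa [hgrad0 s, neg_zero] at this
    exact is_const_of_deriv_eq_zero (fun s => (hd s).differentiableAt)
      (fun s => (hd s).deriv) t 0
  intro t
  rw [hγconst t]
  have : Tendsto γ atTop (nhds (γ 0)) := by
    have : γ = fun _ => γ 0 := funext hγconst
    rw [this]; exact tendsto_const_nhds
  exact tendsto_nhds_unique this hlim_top
end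

section
/- Let f : ℝⁿ → ℝ be continuously differentiable with locally Lipschitz gradient, and let c ∈ ℝ. Let γ₁, γ₂ : ℝ → ℝⁿ be gradient flows of f with f(γ₁(0)) = f(γ₂(0)) = c, ∇f(γ₁(0)) ≠ 0 and ∇f(γ₂(0)) ≠ 0. If γ₁(s) = γ₂(s') for some s, s' ∈ ℝ, then γ₁(0) = γ₂(0) and s = s'. (This is the injectivity of the flow map φ(x, s) = γ_x(s) on the level set f⁻¹(c) × ℝ.) -/
open Set

/-- Global uniqueness of flows of a locally Lipschitz vector field. -/
lemma flow_unique_of_locallyLipschitz {E : Type*} [NormedAddCommGroup E] [NormedSpace ℝ E]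
    (v : E → E) (hv : LocallyLipschitz v) (α β : ℝ → E)
    (hα : ∀ t : ℝ, HasDerivAt α (v (α t)) t)
    (hβ : ∀ t : ℝ, HasDerivAt β (v (β t)) t)
    (t₀ : ℝ) (h : α t₀ = β t₀) : α = β := by
  have hS : {t : ℝ | α t = β t} = univ := by
    have hclosed : IsClosed {t : ℝ | α t = β t} :=
      isClosed_eq (continuous_iff_continuousAt.mpr fun t ↦ (hα t).continuousAt)
        (continuous_iff_continuousAt.mpr fun t ↦ (hβ t).continuousAt)
    have hopen : IsOpen {t : ℝ | α t = β t} := by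
      rw [isOpen_iff_mem_nhds]
      intro t ht
      have ht' : α t = β t := ht
      obtain ⟨K, U, hU, hK⟩ := hv (α t)
      have hαU : ∀ᶠ u in nhds t, α u ∈ U :=
        (hα t).continuousAt.preimage_mem_nhds hU
      have hβU : ∀ᶠ u in nhds t, β u ∈ U :=
        (hβ t).continuousAt.preimage_mem_nhds (by rw [← ht']; exact hU)
      have heq := ODE_solution_unique_of_eventually (v := fun _ : ℝ ↦ v) (s := fun _ ↦ U)
        (K := K) (.of_forall fun _ ↦ hK)
        (hαU.mono fun u hu ↦ ⟨hα u, hu⟩) (hβU.mono fun u hu ↦ ⟨hβ u, hu⟩) ht'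
      exact heq
    rcases eq_empty_or_nonempty {t : ℝ | α t = β t} with he | hne
    · exact absurd (show t₀ ∈ {t : ℝ | α t = β t} from h) (by rw [he]; exact notMem_empty t₀)
    · exact IsClopen.eq_univ ⟨hclosed, hopen⟩ hne
  funext t
  have : t ∈ {t : ℝ | α t = β t} := by rw [hS]; trivial
  exact this

/-- Derivative of `f` along a gradient flow. -/
lemma hasDerivAt_comp_gradient_flow {n : ℕ} (f : EuclideanSpace ℝ (Fin n) → ℝ)
    (hf : ContDiff ℝ 1 f) (γ : ℝ → EuclideanSpace ℝ (Fin n))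
    (hγ : ∀ t : ℝ, HasDerivAt γ (-(gradient f (γ t))) t) (t : ℝ) :
    HasDerivAt (fun u ↦ f (γ u)) (-‖gradient f (γ t)‖ ^ 2) t := by
  have hdf : HasGradientAt f (gradient f (γ t)) (γ t) :=
    (hf.differentiable one_ne_zero (γ t)).hasGradientAt
  have := hdf.hasFDerivAt.comp_hasDerivAt t (hγ t)
  refine this.congr_deriv ?_
  rw [InnerProductSpace.toDual_apply_apply, inner_neg_right, real_inner_self_eq_norm_sq]

/-- Injectivity of the flow map on a level set: if two gradient flows of
`f` start on the level set `f⁻¹(c)` at noncritical points and their trajectories meet,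
then they have the same starting point and meet at equal times. -/
theorem gradient_flow_map_injective_on_level_set
    (n : ℕ) (f : EuclideanSpace ℝ (Fin n) → ℝ)
    (hf : ContDiff ℝ 1 f)
    (hlip : LocallyLipschitz (gradient f))
    (c : ℝ)
    (γ₁ γ₂ : ℝ → EuclideanSpace ℝ (Fin n))
    (hγ₁ : ∀ t : ℝ, HasDerivAt γ₁ (-(gradient f (γ₁ t))) t)
    (hγ₂ : ∀ t : ℝ, HasDerivAt γ₂ (-(gradient f (γ₂ t))) t)
    (hc₁ : f (γ₁ 0) = c) (hc₂ : f (γ₂ 0) = c)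
    (hreg₁ : gradient f (γ₁ 0) ≠ 0) (hreg₂ : gradient f (γ₂ 0) ≠ 0)
    (s s' : ℝ) (hmeet : γ₁ s = γ₂ s') :
    γ₁ 0 = γ₂ 0 ∧ s = s' := by
  set τ := s' - s with hτdef
  -- the shifted second flow is also a gradient flow
  have hγ₂' : ∀ t : ℝ, HasDerivAt (fun u ↦ γ₂ (u + τ)) (-(gradient f (γ₂ (t + τ)))) t := by
    intro t
    have h1 : HasDerivAt (fun u : ℝ ↦ u + τ) 1 t := (hasDerivAt_id t).add_const τ
    have := (hγ₂ (t + τ)).scomp t h1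
    simpa [Function.comp_def] using this
  -- locally Lipschitz negated vector field
  have hlipneg : LocallyLipschitz (fun x ↦ -(gradient f x)) := by
    intro x
    obtain ⟨K, U, hU, hK⟩ := hlip x
    exact ⟨K, U, hU, fun a ha b hb ↦ by
      simpa [edist_neg_neg] using hK ha hb⟩
  -- uniqueness: γ₁ = γ₂ (· + τ)
  have huniq : γ₁ = fun u ↦ γ₂ (u + τ) := by
    apply flow_unique_of_locallyLipschitz (fun x ↦ -(gradient f x)) hlipneg γ₁ _ hγ₁ hγ₂' s
    simp only [hτdef]
    rw [show s + (s' - s) = s' by ring]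
    exact hmeet
  have h0 : γ₁ 0 = γ₂ τ := by rw [huniq]; norm_num
  -- f ∘ γ₂ is antitone
  have hg : ∀ t, HasDerivAt (fun u ↦ f (γ₂ u)) (-‖gradient f (γ₂ t)‖ ^ 2) t :=
    hasDerivAt_comp_gradient_flow f hf γ₂ hγ₂
  have hanti : Antitone (fun u ↦ f (γ₂ u)) := by
    apply antitone_of_deriv_nonpos (fun t ↦ (hg t).differentiableAt)
    intro t
    rw [(hg t).deriv]
    simp [sq_nonneg]
  -- f (γ₂ τ) = c
  have hgτ : f (γ₂ τ) = c := by rw [← h0]; exact hc₁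
  -- show τ = 0
  have hτ0 : τ = 0 := by
    by_contra hτ
    set a := min 0 τ with ha
    set b := max 0 τ with hb
    have hab : a < b := by
      rcases lt_or_gt_of_ne hτ with h | h
      · rw [ha, hb, min_eq_right h.le, max_eq_left h.le]; exact h
      · rw [ha, hb, min_eq_left h.le, max_eq_right h.le]; exact h
    have hga : f (γ₂ a) = c := by
      rcases min_choice 0 τ with h | h <;> rw [ha, h]
      · exact hc₂
      · exact hgτ
    have hgb : f (γ₂ b) = c := by
      rcases max_choice 0 τ with h | h <;> rw [hb, h]
      · exact hc₂
      · exact hgτ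
    -- f ∘ γ₂ is constant c on Icc a b
    have hconst : ∀ t ∈ Icc a b, f (γ₂ t) = c := by
      intro t htab
      have h1 : f (γ₂ t) ≤ f (γ₂ a) := hanti htab.1
      have h2 : f (γ₂ b) ≤ f (γ₂ t) := hanti htab.2
      rw [hga] at h1; rw [hgb] at h2
      linarith
    -- hence the gradient vanishes on Ioo a b
    have hgrad0 : ∀ t ∈ Ioo a b, gradient f (γ₂ t) = 0 := by
      intro t htab
      have hev : (fun u ↦ f (γ₂ u)) =ᶠ[nhds t] fun _ ↦ c := by
        filter_upwards [Ioo_mem_nhds htab.1 htab.2] with u hu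
        exact hconst u (Ioo_subset_Icc_self hu)
      have hzero : HasDerivAt (fun u ↦ f (γ₂ u)) 0 t :=
        (hasDerivAt_const t c).congr_of_eventuallyEq hev
      have := hzero.unique (hg t)
      have hnorm : ‖gradient f (γ₂ t)‖ = 0 := by
        nlinarith [norm_nonneg (gradient f (γ₂ t)), sq_nonneg ‖gradient f (γ₂ t)‖]
      exact norm_eq_zero.mp hnorm
    -- continuity: gradient also vanishes at 0 ∈ Icc a b = closure (Ioo a b)
    have hcont : Continuous fun t ↦ gradient f (γ₂ t) :=
      hlip.continuous.comp (continuous_iff_continuousAt.mpr fun t ↦ (hγ₂ t).continuousAt)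
    have hclosed : IsClosed {t : ℝ | gradient f (γ₂ t) = 0} :=
      isClosed_eq hcont continuous_const
    have hsub : Icc a b ⊆ {t : ℝ | gradient f (γ₂ t) = 0} := by
      rw [← closure_Ioo hab.ne]
      exact hclosed.closure_subset_iff.mpr hgrad0
    have h0mem : (0 : ℝ) ∈ Icc a b := ⟨min_le_left 0 τ, le_max_left 0 τ⟩
    exact hreg₂ (hsub h0mem)
  refine ⟨?_, by linarith [hτdef ▸ hτ0]⟩
  rw [h0, hτ0]
end

section
/- Let s, m ≥ 1, let y : [0,∞) → ℝ^s and z : [0,∞) → ℝ^m be differentiable, let H be a continuous map from ℝ^m to s×s real matrices, and suppose there exist constants 0 < λ ≤ Λ and K > 0 such that for all t ≥ 0: (i) λ‖h‖² ≤ −⟨H(z(t))h, h⟩ ≤ Λ‖h‖² for all h ∈ ℝ^s; (ii) ‖y'(t) − H(z(t))·y(t)‖ ≤ K‖y(t)‖²; (iii) ‖z'(t)‖ ≤ K‖y(t)‖²; (iv) y(t) ≠ 0 for all t, y(t) → 0 and z(t) → z_p as t → ∞. Then limsup_{t→∞} ‖z(t) − z_p‖ / ‖y(t)‖² < ∞.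 -/
open Filter
open scoped RealInnerProductSpace

/-- Normal bias of a Morse–Bott gradient flow, analytic core. If
`y' = H(z)y + O(‖y‖²)`, `z' = O(‖y‖²)`, with `H(z(t))` uniformly negative definite,
`y t ≠ 0`, `y → 0` and `z → z_p`, then `limsup ‖z(t) − z_p‖ / ‖y(t)‖² < ∞`. -/
theorem morse_bott_flow_normal_bias
    (s m : ℕ) (hs : 1 ≤ s) (hm : 1 ≤ m)
    (y y' : ℝ → EuclideanSpace ℝ (Fin s))
    (z z' : ℝ → EuclideanSpace ℝ (Fin m))
    (H : EuclideanSpace ℝ (Fin m) →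
      (EuclideanSpace ℝ (Fin s) →L[ℝ] EuclideanSpace ℝ (Fin s)))
    (hH : Continuous H)
    (lam Lam K : ℝ) (hlam : 0 < lam) (hlamLam : lam ≤ Lam) (hK : 0 < K)
    (hy : ∀ t : ℝ, 0 ≤ t → HasDerivAt y (y' t) t)
    (hz : ∀ t : ℝ, 0 ≤ t → HasDerivAt z (z' t) t)
    (hdef : ∀ t : ℝ, 0 ≤ t → ∀ h : EuclideanSpace ℝ (Fin s),
      lam * ‖h‖ ^ 2 ≤ -⟪H (z t) h, h⟫ ∧ -⟪H (z t) h, h⟫ ≤ Lam * ‖h‖ ^ 2)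
    (hy' : ∀ t : ℝ, 0 ≤ t → ‖y' t - H (z t) (y t)‖ ≤ K * ‖y t‖ ^ 2)
    (hz' : ∀ t : ℝ, 0 ≤ t → ‖z' t‖ ≤ K * ‖y t‖ ^ 2)
    (hyne : ∀ t : ℝ, 0 ≤ t → y t ≠ 0)
    (hylim : Tendsto y atTop (nhds 0))
    (zp : EuclideanSpace ℝ (Fin m))
    (hzlim : Tendsto z atTop (nhds zp)) :
    ∃ C : ℝ, ∀ᶠ t in atTop, ‖z t - zp‖ / ‖y t‖ ^ 2 ≤ C := by

  -- Choose T ≥ 1 beyond which `K * ‖y u‖ ≤ lam / 2`.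
  have hsmall : ∀ᶠ u in atTop, ‖y u‖ < lam / (2 * K) := by
    have h0 : (0:ℝ) < lam / (2 * K) := by positivity
    have := hylim.norm
    simp only [norm_zero] at this
    exact this.eventually_lt_const h0
  obtain ⟨T₀, hT₀⟩ := (eventually_atTop.1 hsmall)
  set T : ℝ := max T₀ 1 with hT
  have hT1 : (1:ℝ) ≤ T := le_max_right _ _
  have hTpos : (0:ℝ) < T := lt_of_lt_of_le one_pos hT1
  have hTnn : ∀ u : ℝ, T ≤ u → 0 ≤ u := fun u hu => le_trans hTpos.le hu
  have hTsmall : ∀ u : ℝ, T ≤ u → K * ‖y u‖ ≤ lam / 2 := by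
    intro u hu
    have h1 : ‖y u‖ < lam / (2 * K) := hT₀ u (le_trans (le_max_left _ _) hu)
    have h2 : K * ‖y u‖ ≤ K * (lam / (2 * K)) :=
      mul_le_mul_of_nonneg_left h1.le hK.le
    calc K * ‖y u‖ ≤ K * (lam / (2 * K)) := h2
      _ = lam / 2 := by field_simp
  -- derivative of ‖y‖²
  have hfd : ∀ u : ℝ, 0 ≤ u →
      HasDerivAt (fun u => ‖y u‖ ^ 2) (2 * ⟪y' u, y u⟫) u := by
    intro u hu
    have h := (hy u hu).inner ℝ (hy u hu)
    have heq : (fun u => (⟪y u, y u⟫ : ℝ)) = fun u => ‖y u‖ ^ 2 := by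
      funext v; exact real_inner_self_eq_norm_sq (y v)
    rw [heq] at h
    have h2 : (⟪y u, y' u⟫ + ⟪y' u, y u⟫ : ℝ) = 2 * ⟪y' u, y u⟫ := by
      rw [real_inner_comm (y u) (y' u)]; ring
    rw [h2] at h
    exact h
  -- the key differential inequality on [T, ∞)
  have hkey : ∀ u : ℝ, T ≤ u → 2 * ⟪y' u, y u⟫ ≤ -lam * ‖y u‖ ^ 2 := by
    intro u hu
    have hu0 : (0:ℝ) ≤ u := hTnn u hu
    have h1 : (⟪H (z u) (y u), y u⟫ : ℝ) ≤ -(lam * ‖y u‖ ^ 2) := by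
      have := (hdef u hu0 (y u)).1
      linarith
    have h2 : (⟪y' u - H (z u) (y u), y u⟫ : ℝ) ≤ (lam / 2) * ‖y u‖ ^ 2 := by
      calc (⟪y' u - H (z u) (y u), y u⟫ : ℝ) ≤ ‖y' u - H (z u) (y u)‖ * ‖y u‖ :=
            real_inner_le_norm _ _
        _ ≤ (K * ‖y u‖ ^ 2) * ‖y u‖ :=
            mul_le_mul_of_nonneg_right (hy' u hu0) (norm_nonneg _)
        _ = (K * ‖y u‖) * ‖y u‖ ^ 2 := by ring
        _ ≤ (lam / 2) * ‖y u‖ ^ 2 :=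
            mul_le_mul_of_nonneg_right (hTsmall u hu) (by positivity)
    have h3 : (⟪y' u, y u⟫ : ℝ) =
        ⟪y' u - H (z u) (y u), y u⟫ + ⟪H (z u) (y u), y u⟫ := by
      rw [← inner_add_left]; congr 1; abel
    nlinarith [h1, h2, h3]
  -- exponential decay of ‖y‖² on [T, ∞)
  have hanti : AntitoneOn (fun u => ‖y u‖ ^ 2 * Real.exp (lam * u)) (Set.Ici T) := by
    have hg : ∀ u : ℝ, 0 ≤ u → HasDerivAt (fun u => ‖y u‖ ^ 2 * Real.exp (lam * u))
        (2 * ⟪y' u, y u⟫ * Real.exp (lam * u) + ‖y u‖ ^ 2 * (lam * Real.exp (lam * u))) u := by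
      intro u hu
      have he : HasDerivAt (fun v : ℝ => Real.exp (lam * v)) (lam * Real.exp (lam * u)) u := by
        have h0 := ((hasDerivAt_id u).const_mul lam).exp
        simp only [id_eq] at h0
        convert h0 using 1
        ring
      exact (hfd u hu).mul he
    apply antitoneOn_of_deriv_nonpos (convex_Ici T)
    · intro u hu
      exact ((hg u (hTnn u hu)).continuousAt).continuousWithinAt
    · intro u hu
      rw [interior_Ici] at hu
      exact ((hg u (hTnn u hu.le)).differentiableAt).differentiableWithinAt
    · intro u hu
      rw [interior_Ici] at hu
      have hu' : T ≤ u := le_of_lt hu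
      rw [(hg u (hTnn u hu')).deriv]
      have h1 := hkey u hu'
      have he : (0:ℝ) < Real.exp (lam * u) := Real.exp_pos _
      nlinarith
  have hdecay : ∀ t u : ℝ, T ≤ t → t ≤ u →
      ‖y u‖ ^ 2 ≤ ‖y t‖ ^ 2 * Real.exp (-(lam * (u - t))) := by
    intro t u ht htu
    have h := hanti (Set.mem_Ici.2 ht) (Set.mem_Ici.2 (le_trans ht htu)) htu
    simp only at h
    have he : (0:ℝ) < Real.exp (lam * u) := Real.exp_pos _
    rw [← le_div_iff₀ he] at h
    calc ‖y u‖ ^ 2 ≤ ‖y t‖ ^ 2 * Real.exp (lam * t) / Real.exp (lam * u) := h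
      _ = ‖y t‖ ^ 2 * Real.exp (-(lam * (u - t))) := by
          rw [mul_div_assoc, ← Real.exp_sub]; ring_nf
  -- main bound: for t ≥ T, ‖z t − zp‖ ≤ (K/lam) * ‖y t‖²
  have hmain : ∀ t : ℝ, T ≤ t → ‖z t - zp‖ ≤ K / lam * ‖y t‖ ^ 2 := by
    intro t ht
    have hbd : ∀ x : ℝ, t ≤ x → ‖z x - z t‖ ≤ K / lam * ‖y t‖ ^ 2 := by
      intro x hx
      have hB : ∀ u : ℝ, HasDerivAt
          (fun u => K * ‖y t‖ ^ 2 / lam * (1 - Real.exp (-(lam * (u - t)))))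
          (K * ‖y t‖ ^ 2 * Real.exp (-(lam * (u - t)))) u := by
        intro u
        have h1 : HasDerivAt (fun u : ℝ => -(lam * (u - t))) (-lam) u := by
          simpa using (((hasDerivAt_id u).sub_const t).const_mul lam).fun_neg
        have h2 := ((h1.exp.const_sub 1).const_mul (K * ‖y t‖ ^ 2 / lam))
        refine h2.congr_deriv ?_
        field_simp
      have key := image_norm_le_of_norm_deriv_right_le_deriv_boundary
        (f := fun u => z u - z t) (f' := z') (a := t) (b := x)
        (B := fun u => K * ‖y t‖ ^ 2 / lam * (1 - Real.exp (-(lam * (u - t)))))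
        (B' := fun u => K * ‖y t‖ ^ 2 * Real.exp (-(lam * (u - t))))
        (fun u hu => (((hz u (hTnn u (le_trans ht hu.1))).sub_const
            (z t)).continuousAt).continuousWithinAt)
        (fun u hu => ((hz u (hTnn u (le_trans ht hu.1))).sub_const
            (z t)).hasDerivWithinAt)
        (by simp) hB
        (fun u hu => by
          have hu0 : (0:ℝ) ≤ u := hTnn u (le_trans ht hu.1)
          calc ‖z' u‖ ≤ K * ‖y u‖ ^ 2 := hz' u hu0
            _ ≤ K * (‖y t‖ ^ 2 * Real.exp (-(lam * (u - t)))) :=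
                mul_le_mul_of_nonneg_left (hdecay t u ht hu.1) hK.le
            _ = K * ‖y t‖ ^ 2 * Real.exp (-(lam * (u - t))) := by ring)
      have hzx := key (Set.mem_Icc.2 ⟨hx, le_refl x⟩)
      calc ‖z x - z t‖ ≤ K * ‖y t‖ ^ 2 / lam * (1 - Real.exp (-(lam * (x - t)))) := hzx
        _ ≤ K * ‖y t‖ ^ 2 / lam * 1 := by
            apply mul_le_mul_of_nonneg_left _ (by positivity)
            have := Real.exp_pos (-(lam * (x - t)))
            linarith
        _ = K / lam * ‖y t‖ ^ 2 := by ring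
    have hlimit : Tendsto (fun x => ‖z x - z t‖) atTop (nhds ‖zp - z t‖) :=
      ((hzlim.sub_const (z t)).norm)
    have hle : ‖zp - z t‖ ≤ K / lam * ‖y t‖ ^ 2 := by
      apply le_of_tendsto hlimit
      filter_upwards [eventually_ge_atTop t] with x hx using hbd x hx
    rwa [norm_sub_rev] at hle
  refine ⟨K / lam, ?_⟩
  filter_upwards [eventually_ge_atTop T] with t ht
  have hy2 : (0:ℝ) < ‖y t‖ ^ 2 := by
    have hne : ‖y t‖ ≠ 0 := norm_ne_zero_iff.2 (hyne t (hTnn t ht))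
    positivity
  rw [div_le_iff₀ hy2]
  calc ‖z t - zp‖ ≤ K / lam * ‖y t‖ ^ 2 := hmain t ht
    _ = K / lam * ‖y t‖ ^ 2 := rfl
end

section
/- Let s, m ≥ 1, let y : [0,∞) → ℝ^s and z : [0,∞) → ℝ^m be differentiable, let H be a continuous map from ℝ^m to s×s real matrices, and suppose there exist constants 0 < λ ≤ Λ and K > 0 such that for all t ≥ 0: (i) λ‖h‖² ≤ −⟨H(z(t))h, h⟩ ≤ Λ‖h‖² for all h ∈ ℝ^s; (ii) ‖y'(t) − H(z(t))·y(t)‖ ≤ K‖y(t)‖²; (iii) y(t) → 0 as t → ∞. Then y decays exponentially: there exist T, D, μ > 0 such that ‖y(t)‖ ≤ D e^{−μ t} for all t ≥ T. -/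
open Filter
open scoped RealInnerProductSpace

/-- Exponential decay of the normal component. If
`y' = H(z)y + O(‖y‖²)` with `H(z(t))` uniformly negative definite and `y → 0`,
then `y` decays exponentially. -/
theorem morse_bott_flow_normal_exponential_decay
    (s m : ℕ) (hs : 1 ≤ s) (hm : 1 ≤ m)
    (y y' : ℝ → EuclideanSpace ℝ (Fin s))
    (z : ℝ → EuclideanSpace ℝ (Fin m))
    (H : EuclideanSpace ℝ (Fin m) →
      (EuclideanSpace ℝ (Fin s) →L[ℝ] EuclideanSpace ℝ (Fin s)))
    (hH : Continuous H)
    (lam Lam K : ℝ) (hlam : 0 < lam) (hlamLam : lam ≤ Lam) (hK : 0 < K)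
    (hy : ∀ t : ℝ, 0 ≤ t → HasDerivAt y (y' t) t)
    (hdef : ∀ t : ℝ, 0 ≤ t → ∀ h : EuclideanSpace ℝ (Fin s),
      lam * ‖h‖ ^ 2 ≤ -⟪H (z t) h, h⟫ ∧ -⟪H (z t) h, h⟫ ≤ Lam * ‖h‖ ^ 2)
    (hy' : ∀ t : ℝ, 0 ≤ t → ‖y' t - H (z t) (y t)‖ ≤ K * ‖y t‖ ^ 2)
    (hylim : Tendsto y atTop (nhds 0)) :
    ∃ T D μ : ℝ, 0 < T ∧ 0 < D ∧ 0 < μ ∧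
      ∀ t : ℝ, T ≤ t → ‖y t‖ ≤ D * Real.exp (-μ * t) := by
  -- pick T ≥ 1 with ‖y t‖ ≤ lam/(2K) for t ≥ T
  have hnorm : Tendsto (fun t => ‖y t‖) atTop (nhds 0) := by
    simpa using hylim.norm
  have hsmall : ∀ᶠ t in atTop, ‖y t‖ ≤ lam / (2 * K) :=
    hnorm.eventually_le_const (by positivity)
  obtain ⟨T0, hT0⟩ := eventually_atTop.mp hsmall
  set T : ℝ := max T0 1 with hT
  have hT1 : (1 : ℝ) ≤ T := le_max_right _ _
  have hTpos : (0 : ℝ) < T := lt_of_lt_of_le one_pos hT1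
  have hTsmall : ∀ t, T ≤ t → ‖y t‖ ≤ lam / (2 * K) := fun t ht =>
    hT0 t ((le_max_left _ _).trans ht)
  -- the Lyapunov function
  set g : ℝ → ℝ := fun t => ‖y t‖ ^ 2 * Real.exp (lam * t) with hg
  have hgderiv : ∀ t : ℝ, 0 ≤ t → HasDerivAt g
      ((2 * ⟪y' t, y t⟫) * Real.exp (lam * t) + ‖y t‖ ^ 2 * (lam * Real.exp (lam * t))) t := by
    intro t ht
    have hf : HasDerivAt (fun u => ‖y u‖ ^ 2) (2 * ⟪y' t, y t⟫) t := by
      have := (hy t ht).inner ℝ (hy t ht)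
      have heq : (fun u => ⟪y u, y u⟫) = fun u => ‖y u‖ ^ 2 := by
        funext u; rw [real_inner_self_eq_norm_sq]
      rw [heq] at this
      rw [real_inner_comm (y' t) (y t), ← two_mul] at this
      exact this
    have hexp : HasDerivAt (fun u => Real.exp (lam * u)) (lam * Real.exp (lam * t)) t := by
      have h1 : HasDerivAt (fun u : ℝ => lam * u) lam t := by
        simpa using (hasDerivAt_id t).const_mul lam
      simpa [mul_comm] using h1.exp
    exact hf.mul hexp
  -- derivative of g is nonpositive on (T, ∞)
  have hgmono : AntitoneOn g (Set.Ici T) := by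
    apply antitoneOn_of_deriv_nonpos (convex_Ici T)
    · intro t ht
      exact ((hgderiv t (hTpos.le.trans ht)).continuousAt).continuousWithinAt
    · intro t ht
      rw [interior_Ici] at ht
      exact (hgderiv t (hTpos.le.trans (le_of_lt ht))).differentiableAt.differentiableWithinAt
    · intro t ht
      rw [interior_Ici] at ht
      have htT : T ≤ t := le_of_lt ht
      have ht0 : (0 : ℝ) ≤ t := hTpos.le.trans htT
      rw [(hgderiv t ht0).deriv]
      have hbound : 2 * ⟪y' t, y t⟫ + lam * ‖y t‖ ^ 2 ≤ 0 := by
        have h1 : ⟪H (z t) (y t), y t⟫ ≤ -(lam * ‖y t‖ ^ 2) := by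
          have := (hdef t ht0 (y t)).1; linarith
        have h2 : ⟪y' t - H (z t) (y t), y t⟫ ≤ K * ‖y t‖ ^ 2 * ‖y t‖ := by
          calc ⟪y' t - H (z t) (y t), y t⟫ ≤ ‖y' t - H (z t) (y t)‖ * ‖y t‖ :=
                real_inner_le_norm _ _
            _ ≤ K * ‖y t‖ ^ 2 * ‖y t‖ :=
                mul_le_mul_of_nonneg_right (hy' t ht0) (norm_nonneg _)
        have h3 : ⟪y' t, y t⟫ = ⟪H (z t) (y t), y t⟫ + ⟪y' t - H (z t) (y t), y t⟫ := by
          rw [← inner_add_left]; congr 1; abel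
        have h4 : K * ‖y t‖ ^ 2 * ‖y t‖ ≤ (lam / 2) * ‖y t‖ ^ 2 := by
          have hsm := hTsmall t htT
          have : K * ‖y t‖ ≤ lam / 2 := by
            calc K * ‖y t‖ ≤ K * (lam / (2 * K)) :=
                  mul_le_mul_of_nonneg_left hsm hK.le
              _ = lam / 2 := by field_simp
          have hnn : (0 : ℝ) ≤ ‖y t‖ ^ 2 := sq_nonneg _
          calc K * ‖y t‖ ^ 2 * ‖y t‖ = (K * ‖y t‖) * ‖y t‖ ^ 2 := by ring
            _ ≤ (lam / 2) * ‖y t‖ ^ 2 := mul_le_mul_of_nonneg_right this hnn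
        nlinarith
      have hexp_pos : (0 : ℝ) < Real.exp (lam * t) := Real.exp_pos _
      nlinarith
  -- conclude
  refine ⟨T, (‖y T‖ + 1) * Real.exp (lam * T / 2), lam / 2, hTpos, by positivity,
    by positivity, ?_⟩
  intro t ht
  have hgt : g t ≤ g T := hgmono Set.self_mem_Ici ht ht
  have hDpos : (0 : ℝ) < (‖y T‖ + 1) * Real.exp (lam * T / 2) := by positivity
  have hexp_pos : (0 : ℝ) < Real.exp (lam * t) := Real.exp_pos _
  apply le_of_pow_le_pow_left₀ (two_ne_zero) (by positivity)
  have key : ‖y t‖ ^ 2 ≤ ‖y T‖ ^ 2 * Real.exp (lam * T) * Real.exp (-(lam * t)) := by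
    have : ‖y t‖ ^ 2 * Real.exp (lam * t) ≤ ‖y T‖ ^ 2 * Real.exp (lam * T) := hgt
    have h := (le_div_iff₀ hexp_pos).mpr this
    simpa [Real.exp_neg, div_eq_mul_inv] using h
  calc ‖y t‖ ^ 2 ≤ ‖y T‖ ^ 2 * Real.exp (lam * T) * Real.exp (-(lam * t)) := key
    _ ≤ ((‖y T‖ + 1) * Real.exp (lam * T / 2) * Real.exp (-(lam / 2) * t)) ^ 2 := by
        rw [mul_pow, mul_pow, ← Real.exp_nat_mul, ← Real.exp_nat_mul]
        have h1 : ‖y T‖ ^ 2 ≤ (‖y T‖ + 1) ^ 2 := by nlinarith [norm_nonneg (y T)]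
        have h2 : Real.exp ((2:ℕ) * (lam * T / 2)) = Real.exp (lam * T) := by
          congr 1; push_cast; ring
        have h3 : Real.exp ((2:ℕ) * (-(lam / 2) * t)) = Real.exp (-(lam * t)) := by
          congr 1; push_cast; ring
        rw [h2, h3]
        exact mul_le_mul_of_nonneg_right
          (mul_le_mul_of_nonneg_right h1 (Real.exp_pos _).le) (Real.exp_pos _).le
end

section
/- Let f : ℝ → ℝ be real analytic on a neighborhood of p with f'(p) = 0, and suppose f − f(p) is not identically zero on any neighborhood of p. Then there exist a neighborhood U of p, a constant C > 0 and an exponent θ ∈ [1/2, 1) such that |f'(q)| ≥ C|f(q) − f(p)|^θ for all q ∈ U. -/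
/-- One-dimensional Łojasiewicz gradient inequality. If `f : ℝ → ℝ` is
real analytic near `p`, `f'(p) = 0`, and `f - f p` is not identically zero on any
neighborhood of `p`, then `|f'(q)| ≥ C |f q - f p|^θ` near `p` for some `C > 0` and
`θ ∈ [1/2, 1)`. -/
theorem lojasiewicz_inequality_one_dim
    (f : ℝ → ℝ) (p : ℝ)
    (hf : AnalyticAt ℝ f p)
    (hcrit : deriv f p = 0)
    (hnontriv : ∀ U ∈ nhds p, ∃ q ∈ U, f q ≠ f p) :
    ∃ U ∈ nhds p, ∃ C : ℝ, 0 < C ∧ ∃ θ : ℝ, θ ∈ Set.Ico (1/2 : ℝ) 1 ∧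
      ∀ q ∈ U, C * |f q - f p| ^ θ ≤ |deriv f q| := by
  set g : ℝ → ℝ := fun x => f x - f p with hg
  have hga : AnalyticAt ℝ g p := hf.sub analyticAt_const
  -- g is not eventually zero
  have hne : analyticOrderAt g p ≠ ⊤ := by
    intro htop
    rw [analyticOrderAt_eq_top] at htop
    have h := htop
    obtain ⟨U, hU, hU2⟩ := h.exists_mem
    obtain ⟨q, hq, hq2⟩ := hnontriv U hU
    exact hq2 (by have := hU2 q hq; simpa [g, sub_eq_zero] using this)
  obtain ⟨n, hn⟩ := WithTop.ne_top_iff_exists.mp hne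
  obtain ⟨h, hh, hh0, heq⟩ := (hga.analyticOrderAt_eq_natCast (n := n)).mp hn.symm
  simp only [smul_eq_mul] at heq
  -- n ≥ 1 since g p = 0
  have hgp : g p = 0 := by simp [g]
  have hn1 : n ≠ 0 := by
    rintro rfl
    have := heq.self_of_nhds
    simp [hgp] at this
    exact hh0 this.symm
  obtain ⟨m, rfl⟩ : ∃ m, n = m + 1 := ⟨n - 1, (Nat.succ_pred_eq_of_ne_zero hn1).symm⟩
  -- derivative of g at p equals deriv f p = 0
  have hderivg : ∀ q : ℝ, deriv g q = deriv f q := fun q => deriv_sub_const (f p)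
  -- analyticity of h near p
  obtain ⟨s, hs, hhs⟩ := hh.exists_mem_nhds_analyticOnNhd
  have hps : p ∈ s := mem_of_mem_nhds hs
  have hdha : AnalyticAt ℝ (deriv h) p := hhs.deriv p hps
  -- eventually, deriv f q = (q-p)^m * ((m+1) * h q + (q-p) * deriv h q)
  have E1 : ∀ᶠ q in nhds p, deriv f q
      = (q - p) ^ m * (((m : ℝ) + 1) * h q + (q - p) * deriv h q) := by
    filter_upwards [heq.eventually_nhds, hh.eventually_analyticAt] with q hq hq2
    have hd : HasDerivAt (fun z => (z - p) ^ (m + 1) * h z)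
        (((m : ℝ) + 1) * (q - p) ^ m * 1 * h q + (q - p) ^ (m + 1) * deriv h q) q := by
      have h1 : HasDerivAt (fun z : ℝ => (z - p) ^ (m + 1))
          (((m : ℝ) + 1) * (q - p) ^ m * 1) q := by
        have := ((hasDerivAt_id q).sub_const p).fun_pow (m + 1)
        simpa using this
      exact h1.mul hq2.differentiableAt.hasDerivAt
    have : deriv g q = ((m : ℝ) + 1) * (q - p) ^ m * 1 * h q
        + (q - p) ^ (m + 1) * deriv h q := by
      rw [Filter.EventuallyEq.deriv_eq hq]
      exact hd.deriv
    rw [← hderivg q, this, pow_succ]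
    ring
  -- n ≥ 2, i.e. m ≥ 1
  have hm1 : 1 ≤ m := by
    by_contra hm
    push_neg at hm
    interval_cases m
    have := E1.self_of_nhds
    simp [hcrit] at this
    exact hh0 this.symm
  have hp0 : 0 < |h p| := abs_pos.mpr hh0
  -- set up θ and C
  set θ : ℝ := (m : ℝ) / ((m : ℝ) + 1) with hθ
  have hm0 : (0 : ℝ) < (m : ℝ) + 1 := by positivity
  have hθ0 : 0 ≤ θ := by positivity
  have hθmem : θ ∈ Set.Ico (1/2 : ℝ) 1 := by
    constructor
    · rw [div_le_div_iff₀ (by norm_num) hm0]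
      have : (1 : ℝ) ≤ (m : ℝ) := by exact_mod_cast hm1
      linarith
    · rw [div_lt_one hm0]; linarith
  set K : ℝ := 2 * |h p| with hK
  have hK0 : 0 < K := by positivity
  set C : ℝ := (((m : ℝ) + 1) * |h p| / 4) / K ^ θ with hC
  have hC0 : 0 < C := by positivity
  -- eventual bounds
  have E2 : ∀ᶠ q in nhds p, |h q| ≤ K := by
    have : ContinuousAt (fun q => |h q|) p := hh.continuousAt.abs
    have := this.eventually_le_const (by simp [hK]; linarith : |h p| < K)
    exact this
  have E3 : ∀ᶠ q in nhds p, |h p| / 2 ≤ |h q| := by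
    have : ContinuousAt (fun q => |h q|) p := hh.continuousAt.abs
    exact this.eventually_const_le (by linarith : |h p| / 2 < |h p|)
  have E4 : ∀ᶠ q in nhds p, |q - p| * |deriv h q| ≤ ((m : ℝ) + 1) * |h p| / 4 := by
    have hc : ContinuousAt (fun q => |q - p| * |deriv h q|) p := by
      exact ((continuous_abs.comp (continuous_id.sub continuous_const)).continuousAt).mul
        hdha.continuousAt.abs
    have := hc.eventually_le_const
      (by simp; positivity : |p - p| * |deriv h p| < ((m : ℝ) + 1) * |h p| / 4)
    exact this
  -- combine
  have Emain : ∀ᶠ q in nhds p, C * |f q - f p| ^ θ ≤ |deriv f q| := by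
    filter_upwards [E1, E2, E3, E4, heq] with q h1 h2 h3 h4 h5
    have habs : |f q - f p| = |q - p| ^ (m + 1) * |h q| := by
      have : f q - f p = (q - p) ^ (m + 1) * h q := h5
      rw [this, abs_mul, abs_pow]
    -- rpow computation
    have hpow : |f q - f p| ^ θ = |q - p| ^ m * |h q| ^ θ := by
      rw [habs, Real.mul_rpow (by positivity) (abs_nonneg _)]
      congr 1
      rw [← Real.rpow_natCast |q - p| (m + 1), ← Real.rpow_mul (abs_nonneg _)]
      rw [← Real.rpow_natCast |q - p| m]
      congr 1
      rw [hθ]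
      push_cast
      field_simp
    -- bound on the bracket
    have hbr : ((m : ℝ) + 1) * |h p| / 4
        ≤ |((m : ℝ) + 1) * h q + (q - p) * deriv h q| := by
      have h6 : ((m : ℝ) + 1) * |h q| - |q - p| * |deriv h q|
          ≤ |((m : ℝ) + 1) * h q + (q - p) * deriv h q| := by
        have := abs_sub_abs_le_abs_sub (((m : ℝ) + 1) * h q)
          (-((q - p) * deriv h q))
        simp only [abs_neg, sub_neg_eq_add] at this
        calc ((m : ℝ) + 1) * |h q| - |q - p| * |deriv h q|
            = |((m : ℝ) + 1) * h q| - |(q - p) * deriv h q| := by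
              rw [abs_mul, abs_mul, abs_of_pos hm0]
          _ ≤ |((m : ℝ) + 1) * h q + (q - p) * deriv h q| := this
      have h7 : ((m : ℝ) + 1) * (|h p| / 2) ≤ ((m : ℝ) + 1) * |h q| :=
        mul_le_mul_of_nonneg_left h3 (le_of_lt hm0)
      nlinarith
    have hhb : |h q| ^ θ ≤ K ^ θ := Real.rpow_le_rpow (abs_nonneg _) h2 hθ0
    calc C * |f q - f p| ^ θ = C * (|q - p| ^ m * |h q| ^ θ) := by rw [hpow]
      _ ≤ C * (|q - p| ^ m * K ^ θ) := by
          apply mul_le_mul_of_nonneg_left _ (le_of_lt hC0)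
          exact mul_le_mul_of_nonneg_left hhb (by positivity)
      _ = |q - p| ^ m * (((m : ℝ) + 1) * |h p| / 4) := by
          rw [hC]; field_simp
      _ ≤ |q - p| ^ m * |((m : ℝ) + 1) * h q + (q - p) * deriv h q| := by
          exact mul_le_mul_of_nonneg_left hbr (by positivity)
      _ = |deriv f q| := by rw [h1, abs_mul, abs_pow]
  obtain ⟨U, hU, hU2⟩ := Emain.exists_mem
  exact ⟨U, hU, C, hC0, θ, hθmem, hU2⟩
end

section
/- Let f : ℝⁿ → ℝ be smooth with all critical points nondegenerate (a Morse function), and let γ : [0,∞) → ℝⁿ be a gradient flow of f whose image is contained in a compact subset of ℝⁿ. Then lim_{t→∞} γ(t) exists and is a critical point of f. -/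
open Filter

open Set InnerProductSpace

lemma aux_descent (g : ℝ → ℝ) (δ : ℝ) (hδ : 0 < δ)
    (h : ∀ T, 0 ≤ T → ∃ t, T ≤ t ∧ g t ≤ g T - δ)
    (m : ℝ) (hm : ∀ t, 0 ≤ t → m ≤ g t) : False := by
  set u : ℕ → ℝ := fun k => Nat.rec 0 (fun _ x => if hx : 0 ≤ x then (h x hx).choose else 0) k
    with hu
  have key : ∀ k, 0 ≤ u k ∧ g (u k) ≤ g 0 - k * δ := by
    intro k
    induction k with
    | zero => exact ⟨le_refl 0, by show g 0 ≤ g 0 - _; norm_num⟩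
    | succ k ih =>
      obtain ⟨h0, h1⟩ := ih
      have hstep : u (k + 1) = (h (u k) h0).choose := by simp [hu, dif_pos h0]; exact dif_pos h0
      obtain ⟨hle, hg⟩ := (h (u k) h0).choose_spec
      constructor
      · rw [hstep]; linarith
      · rw [hstep]; push_cast; linarith
  obtain ⟨k, hk⟩ := exists_nat_gt ((g 0 - m) / δ)
  have := (key k).2
  have := hm (u k) (key k).1
  have : (g 0 - m) / δ < k := hk
  rw [div_lt_iff₀ hδ] at this
  linarith

lemma aux_sep {E : Type*} [MetricSpace E] {Z : Set E} (hZ : Z.Finite) :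
    ∃ d, 0 < d ∧ ∀ x ∈ Z, ∀ y ∈ Z, x ≠ y → d ≤ dist x y := by
  classical
  set s := hZ.toFinset
  set F := ((s ×ˢ s).filter (fun p => p.1 ≠ p.2)).image fun p => dist p.1 p.2 with hF
  rcases F.eq_empty_or_nonempty with h | h
  · refine ⟨1, one_pos, fun x hx y hy hxy =>
      absurd ?_ (Finset.eq_empty_iff_forall_notMem.mp h (dist x y))⟩
    exact Finset.mem_image.mpr ⟨(x, y), Finset.mem_filter.mpr ⟨Finset.mem_product.mpr
      ⟨hZ.mem_toFinset.mpr hx, hZ.mem_toFinset.mpr hy⟩, hxy⟩, rfl⟩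
  · refine ⟨F.min' h, ?_, fun x hx y hy hxy => Finset.min'_le _ _ ?_⟩
    · obtain ⟨p, hp, hd⟩ := Finset.mem_image.mp (F.min'_mem h)
      rw [← hd]
      exact dist_pos.mpr (Finset.mem_filter.mp hp).2
    · exact Finset.mem_image.mpr ⟨(x, y), Finset.mem_filter.mpr ⟨Finset.mem_product.mpr
        ⟨hZ.mem_toFinset.mpr hx, hZ.mem_toFinset.mpr hy⟩, hxy⟩, rfl⟩

lemma aux_grad_contDiff (n : ℕ) (f : EuclideanSpace ℝ (Fin n) → ℝ) (hf : ContDiff ℝ (⊤ : ℕ∞) f) :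
    ContDiff ℝ (⊤ : ℕ∞) (gradient f) := by
  have h1 : ContDiff ℝ (⊤ : ℕ∞) (fderiv ℝ f) := hf.fderiv_right (by simp)
  have h2 : ContDiff ℝ (⊤ : ℕ∞) (⇑((toDual ℝ (EuclideanSpace ℝ (Fin n))).symm)) :=
    (toDual ℝ (EuclideanSpace ℝ (Fin n))).symm.toContinuousLinearEquiv.toContinuousLinearMap.contDiff
  exact h2.comp h1

lemma aux_isolated (n : ℕ) (f : EuclideanSpace ℝ (Fin n) → ℝ) (hf : ContDiff ℝ (⊤ : ℕ∞) f)
    (p : EuclideanSpace ℝ (Fin n)) (hp : gradient f p = 0)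
    (hinj : Function.Injective (fderiv ℝ (gradient f) p)) :
    ∀ᶠ x in nhds p, gradient f x = 0 → x = p := by
  have hstrict : HasStrictFDerivAt (gradient f) (fderiv ℝ (gradient f) p) p :=
    ((aux_grad_contDiff n f hf).contDiffAt).hasStrictFDerivAt (by simp)
  have hsurj : Function.Surjective
      ⇑((fderiv ℝ (gradient f) p : EuclideanSpace ℝ (Fin n) →ₗ[ℝ] EuclideanSpace ℝ (Fin n))) :=
    LinearMap.injective_iff_surjective.mp hinj
  have hbij : Function.Bijective
      ⇑((fderiv ℝ (gradient f) p : EuclideanSpace ℝ (Fin n) →ₗ[ℝ] EuclideanSpace ℝ (Fin n))) :=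
    ⟨hinj, hsurj⟩
  let e := (LinearEquiv.ofBijective _ hbij).toContinuousLinearEquiv
  have hcoe : (e : EuclideanSpace ℝ (Fin n) →L[ℝ] EuclideanSpace ℝ (Fin n))
      = fderiv ℝ (gradient f) p := by ext v; rfl
  have hstrict' : HasStrictFDerivAt (gradient f)
      (e : EuclideanSpace ℝ (Fin n) →L[ℝ] EuclideanSpace ℝ (Fin n)) p := by
    rw [hcoe]; exact hstrict
  filter_upwards [hstrict'.eventually_left_inverse] with x hx hx0
  have h1 : x = hstrict'.localInverse (gradient f) e p (gradient f x) := hx.symm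
  rw [hx0, ← hp] at h1
  rw [h1, hstrict'.localInverse_apply_image]

/-- A gradient flow of a Morse function whose image lies in a compact
set converges to a critical point. -/
theorem morse_gradient_flow_in_compact_converges
    (n : ℕ)
    (f : EuclideanSpace ℝ (Fin n) → ℝ)
    (hf : ContDiff ℝ (⊤ : ℕ∞) f)
    (hmorse : ∀ p : EuclideanSpace ℝ (Fin n), gradient f p = 0 →
      Function.Injective (fderiv ℝ (gradient f) p))
    (γ : ℝ → EuclideanSpace ℝ (Fin n))
    (hγ : ∀ t : ℝ, 0 ≤ t → HasDerivAt γ (-(gradient f (γ t))) t)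
    (K : Set (EuclideanSpace ℝ (Fin n)))
    (hK : IsCompact K)
    (hrange : ∀ t : ℝ, 0 ≤ t → γ t ∈ K) :
    ∃ q : EuclideanSpace ℝ (Fin n),
      Tendsto γ atTop (nhds q) ∧ gradient f q = 0 := by
  set g : ℝ → ℝ := fun t => f (γ t) with hgdef
  have hγcont : ContinuousOn γ (Ici 0) := fun u hu => ((hγ u hu).continuousAt).continuousWithinAt
  have hgradcont : Continuous (gradient f) := (aux_grad_contDiff n f hf).continuous
  -- derivative of g
  have hg' : ∀ t : ℝ, 0 ≤ t → HasDerivAt g (-‖gradient f (γ t)‖ ^ 2) t := by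
    intro t ht
    have hd1 : HasFDerivAt f (fderiv ℝ f (γ t)) (γ t) :=
      ((hf.differentiable (by simp)) (γ t)).hasFDerivAt
    have := hd1.comp_hasDerivAt t (hγ t ht)
    have hval : fderiv ℝ f (γ t) (-(gradient f (γ t))) = -‖gradient f (γ t)‖ ^ 2 := by
      rw [show fderiv ℝ f (γ t) = toDual ℝ _ (gradient f (γ t)) from
        ((toDual ℝ _).apply_symm_apply _).symm, toDual_apply_apply, inner_neg_right,
        real_inner_self_eq_norm_sq]
    rwa [hval] at this
  have hgcont : ContinuousOn g (Ici 0) :=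
    fun u hu => ((hg' u hu).differentiableAt.continuousAt).continuousWithinAt
  -- g is antitone on [0,∞)
  have hganti : AntitoneOn g (Ici 0) := by
    apply antitoneOn_of_deriv_nonpos (convex_Ici 0) hgcont
    · intro x hx
      rw [interior_Ici] at hx
      exact (hg' x (le_of_lt hx)).differentiableAt.differentiableWithinAt
    · intro x hx
      rw [interior_Ici] at hx
      rw [(hg' x (le_of_lt hx)).deriv]
      have := sq_nonneg ‖gradient f (γ x)‖
      linarith
  -- lower bound
  obtain ⟨x₀, hx₀K, hx₀⟩ := hK.exists_isMinOn ⟨γ 0, hrange 0 le_rfl⟩ hf.continuous.continuousOn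
  set m : ℝ := f x₀ with hmdef
  have hm : ∀ t, 0 ≤ t → m ≤ g t := fun t ht => hx₀ (hrange t ht)
  -- bound on gradient norm
  obtain ⟨C, hC⟩ := hK.exists_bound_of_continuousOn hgradcont.continuousOn
  set M : ℝ := max C 1 with hMdef
  have hM1 : (0:ℝ) < M := lt_of_lt_of_le one_pos (le_max_right _ _)
  have hMb : ∀ x ∈ K, ‖gradient f x‖ ≤ M := fun x hx =>
    le_trans (hC x hx) (le_max_left _ _)
  -- descent estimate
  have descent : ∀ c : ℝ, 0 < c → ∀ a b : ℝ, 0 ≤ a → a ≤ b →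
      (∀ u ∈ Ioo a b, c ≤ ‖gradient f (γ u)‖) → g b ≤ g a - c ^ 2 * (b - a) := by
    intro c hc a b ha hab hann
    have hIcc : Icc a b ⊆ Ici 0 := fun u hu => le_trans ha hu.1
    have hGanti : AntitoneOn (fun u => g u + c ^ 2 * u) (Icc a b) := by
      apply antitoneOn_of_deriv_nonpos (convex_Icc a b)
      · exact (hgcont.mono hIcc).add (continuous_const.mul continuous_id).continuousOn
      · intro x hx
        rw [interior_Icc] at hx
        have h0x : 0 ≤ x := le_trans ha (le_of_lt hx.1)
        exact ((hg' x h0x).differentiableAt.add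
          ((differentiable_id.const_mul (c ^ 2)) x)).differentiableWithinAt
      · intro x hx
        rw [interior_Icc] at hx
        have h0x : 0 ≤ x := le_trans ha (le_of_lt hx.1)
        have hd : HasDerivAt (fun u => g u + c ^ 2 * u) (-‖gradient f (γ x)‖ ^ 2 + c ^ 2) x :=
          (hg' x h0x).add (by simpa using (hasDerivAt_id x).const_mul (c ^ 2))
        rw [hd.deriv]
        have := hann x hx
        nlinarith [norm_nonneg (gradient f (γ x))]
    have := hGanti ⟨le_refl a, hab⟩ ⟨hab, le_refl b⟩ hab
    simp only at this
    linarith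
  -- critical set in K
  set Z : Set (EuclideanSpace ℝ (Fin n)) := {p | gradient f p = 0} ∩ K with hZdef
  have hZcompact : IsCompact Z :=
    hK.inter_left (isClosed_eq hgradcont continuous_const)
  have hZfin : Z.Finite := by
    have hcov := hZcompact.elim_nhds_subcover'
      (fun p _ => {x | gradient f x = 0 → x = p})
      (fun p hp => aux_isolated n f hf p hp.1 (hmorse p hp.1))
    obtain ⟨t, ht⟩ := hcov
    apply Set.Finite.subset (t.finite_toSet.image Subtype.val)
    intro z hz
    obtain ⟨p, hpt, hzp⟩ := Set.mem_iUnion₂.mp (ht hz)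
    have : z = ↑p := hzp hz.1
    exact ⟨p, by simpa using hpt, this.symm⟩
  obtain ⟨d, hd, hsep⟩ := aux_sep hZfin
  -- main per-epsilon claim
  have main : ∀ ε : ℝ, 0 < ε → 3 * ε ≤ d →
      ∃ p ∈ Z, ∀ᶠ t in atTop, dist (γ t) p ≤ 2 * ε := by
    intro ε hε hεd
    set A : Set (EuclideanSpace ℝ (Fin n)) := K \ ⋃ p ∈ Z, Metric.ball p ε with hAdef
    have hAcompact : IsCompact A :=
      hK.diff (isOpen_biUnion fun _ _ => Metric.isOpen_ball)
    obtain ⟨c, hc, hcA⟩ : ∃ c, 0 < c ∧ ∀ x ∈ A, c ≤ ‖gradient f x‖ := by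
      rcases A.eq_empty_or_nonempty with hA | hA
      · exact ⟨1, one_pos, by simp [hA]⟩
      · obtain ⟨x, hx, hmin⟩ := hAcompact.exists_isMinOn hA
          (continuous_norm.comp hgradcont).continuousOn
        refine ⟨‖gradient f x‖, norm_pos_iff.mpr ?_, fun y hy => hmin hy⟩
        intro h0
        exact hx.2 (Set.mem_biUnion ⟨h0, hx.1⟩ (Metric.mem_ball_self hε))
    set δ : ℝ := c ^ 2 * (ε / M) with hδdef
    have hδ : 0 < δ := by positivity
    -- membership in A from annulus
    have hann : ∀ p ∈ Z, ∀ u : ℝ, 0 ≤ u → ε ≤ dist (γ u) p → dist (γ u) p ≤ 2 * ε →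
        γ u ∈ A := by
      intro p hp u hu h1 h2
      refine ⟨hrange u hu, ?_⟩
      intro hmem
      obtain ⟨q, hq, hqball⟩ := Set.mem_iUnion₂.mp hmem
      have hqb : dist (γ u) q < ε := Metric.mem_ball.mp hqball
      rcases eq_or_ne q p with rfl | hqp
      · exact absurd h1 (not_le.mpr hqb)
      · have h3 : dist q p ≤ dist q (γ u) + dist (γ u) p := dist_triangle _ _ _
        have h5 : dist q (γ u) = dist (γ u) q := dist_comm _ _
        have := hsep q hq p hp hqp
        linarith
    -- drop lemma
    have drop : ∀ p ∈ Z, ∀ s t : ℝ, 0 ≤ s → s ≤ t →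
        dist (γ s) p ≤ ε → 2 * ε ≤ dist (γ t) p → g t ≤ g s - δ := by
      intro p hp s t hs0 hst hsin htout
      have hIst : Icc s t ⊆ Ici 0 := fun u hu => le_trans hs0 hu.1
      have hhcont : ContinuousOn (fun u => dist (γ u) p) (Icc s t) :=
        (continuous_id.dist continuous_const).comp_continuousOn (hγcont.mono hIst)
      -- a : last time in the ε-ball
      set S : Set ℝ := Icc s t ∩ (fun u => dist (γ u) p) ⁻¹' (Iic ε) with hSdef
      have hSclosed : IsClosed S := hhcont.preimage_isClosed_of_isClosed isClosed_Icc isClosed_Iic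
      have hsS : s ∈ S := ⟨⟨le_refl s, hst⟩, hsin⟩
      have hSbdd : BddAbove S := (bddAbove_Icc).mono Set.inter_subset_left
      set a : ℝ := sSup S with hadef
      have haS : a ∈ S := hSclosed.csSup_mem ⟨s, hsS⟩ hSbdd
      have ha0 : 0 ≤ a := le_trans hs0 haS.1.1
      -- b : first time after a out of the 2ε-ball
      set S2 : Set ℝ := Icc a t ∩ (fun u => dist (γ u) p) ⁻¹' (Ici (2 * ε)) with hS2def
      have hS2closed : IsClosed S2 :=
        ((hhcont.mono (Icc_subset_Icc haS.1.1 le_rfl)).preimage_isClosed_of_isClosed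
          isClosed_Icc isClosed_Ici)
      have htS2 : t ∈ S2 := ⟨⟨haS.1.2, le_refl t⟩, htout⟩
      set b : ℝ := sInf S2 with hbdef
      have hbS2 : b ∈ S2 := hS2closed.csInf_mem ⟨t, htS2⟩ ((bddBelow_Icc).mono Set.inter_subset_left)
      have hab : a < b := by
        rcases lt_or_eq_of_le hbS2.1.1 with h | h
        · exact h
        · exfalso
          have := haS.2
          have := hbS2.2
          rw [← h] at this
          simp only [Set.mem_preimage, Set.mem_Iic, Set.mem_Ici] at *
          linarith
      -- annulus on Ioo a b
      have hmid : ∀ u ∈ Ioo a b, ε ≤ dist (γ u) p ∧ dist (γ u) p ≤ 2 * ε := by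
        intro u hu
        have huIcc : u ∈ Icc s t := ⟨le_trans haS.1.1 (le_of_lt hu.1),
          le_trans (le_of_lt hu.2) hbS2.1.2⟩
        constructor
        · by_contra h
          push_neg at h
          have : u ∈ S := ⟨huIcc, le_of_lt h⟩
          exact absurd (le_csSup hSbdd this) (not_le.mpr hu.1)
        · by_contra h
          push_neg at h
          have : u ∈ S2 := ⟨⟨le_of_lt hu.1, huIcc.2⟩, le_of_lt h⟩
          exact absurd (csInf_le ((bddBelow_Icc).mono Set.inter_subset_left) this)
            (not_le.mpr hu.2)
      -- b - a ≥ ε / M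
      have hlip : ‖γ b - γ a‖ ≤ M * ‖b - a‖ := by
        apply Convex.norm_image_sub_le_of_norm_hasDerivWithin_le
          (f' := fun u => -(gradient f (γ u))) (s := Icc a b)
          (fun u hu => (hγ u (le_trans ha0 hu.1)).hasDerivWithinAt)
          (fun u hu => by
            rw [norm_neg]
            exact hMb _ (hrange u (le_trans ha0 hu.1)))
          (convex_Icc a b) ⟨le_refl a, le_of_lt hab⟩ ⟨le_of_lt hab, le_refl b⟩
      have hba : ε / M ≤ b - a := by
        have h1 : dist (γ b) p - dist (γ a) p ≤ dist (γ b) (γ a) := by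
          have := dist_triangle (γ b) (γ a) p
          linarith
        have h2 : dist (γ b) (γ a) ≤ M * (b - a) := by
          rw [dist_eq_norm]
          calc ‖γ b - γ a‖ ≤ M * ‖b - a‖ := hlip
          _ = M * (b - a) := by rw [Real.norm_eq_abs, abs_of_nonneg (by linarith)]
        have h3 : ε ≤ dist (γ b) p - dist (γ a) p := by
          have := haS.2
          have := hbS2.2
          simp only [Set.mem_preimage, Set.mem_Iic, Set.mem_Ici] at *
          linarith
        rw [div_le_iff₀ hM1]
        nlinarith
      -- descent over [a, b]
      have hdes : g b ≤ g a - c ^ 2 * (b - a) := by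
        apply descent c hc a b ha0 (le_of_lt hab)
        intro u hu
        have h0u : 0 ≤ u := le_trans ha0 (le_of_lt hu.1)
        exact hcA _ (hann p hp u h0u (hmid u hu).1 (hmid u hu).2)
      have hd1 : δ ≤ c ^ 2 * (b - a) := by
        rw [hδdef]
        apply mul_le_mul_of_nonneg_left hba (by positivity)
      have hga : g a ≤ g s := hganti (Set.mem_Ici.mpr hs0) (Set.mem_Ici.mpr ha0) haS.1.1
      have hgb : g t ≤ g b := hganti (Set.mem_Ici.mpr (le_trans ha0 (le_of_lt hab)))
        (Set.mem_Ici.mpr (le_trans hs0 hst)) hbS2.1.2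
      linarith
    -- no escape after some time
    have noesc : ∀ p ∈ Z, ∃ T, 0 ≤ T ∧ ∀ s t : ℝ, T ≤ s → s ≤ t →
        dist (γ s) p ≤ ε → dist (γ t) p ≤ 2 * ε := by
      intro p hp
      by_contra hcon
      push_neg at hcon
      refine aux_descent g δ hδ ?_ m hm
      intro T hT
      obtain ⟨s, t, hTs, hst, hsin, htout⟩ := hcon T hT
      refine ⟨t, le_trans hTs hst, ?_⟩
      have h1 : g t ≤ g s - δ := drop p hp s t (le_trans hT hTs) hst hsin (le_of_lt htout)
      have h2 : g s ≤ g T := hganti (Set.mem_Ici.mpr hT)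
        (Set.mem_Ici.mpr (le_trans hT hTs)) hTs
      linarith
    -- frequent visits to ε-balls
    have freq : ∃ᶠ t in atTop, ∃ p ∈ Z, dist (γ t) p < ε := by
      rw [frequently_atTop]
      intro T
      by_contra hcon
      push_neg at hcon
      set T' : ℝ := max T 0 with hT'def
      have hT'0 : 0 ≤ T' := le_max_right _ _
      have hAbound : ∀ u : ℝ, T' ≤ u → c ≤ ‖gradient f (γ u)‖ := by
        intro u hu
        apply hcA
        refine ⟨hrange u (le_trans hT'0 hu), ?_⟩
        intro hmem
        obtain ⟨q, hq, hqball⟩ := Set.mem_iUnion₂.mp hmem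
        exact absurd (Metric.mem_ball.mp hqball)
          (not_lt.mpr (hcon u (le_trans (le_max_left T 0) hu) q hq))
      obtain ⟨k, hk⟩ := exists_nat_gt ((g T' - m) / c ^ 2)
      set b : ℝ := T' + (k + 1) with hbdef
      have hTb : T' ≤ b := by
        rw [hbdef]
        have : (0:ℝ) ≤ (k:ℝ) + 1 := by positivity
        linarith
      have hg2 : g b ≤ g T' - c ^ 2 * (b - T') :=
        descent c hc T' b hT'0 hTb (fun u hu => hAbound u (le_of_lt hu.1))
      have hmb := hm b (le_trans hT'0 hTb)
      have hk' : g T' - m < c ^ 2 * ((k:ℝ) + 1) := by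
        rw [div_lt_iff₀ (by positivity : (0:ℝ) < c ^ 2)] at hk
        have : ((k:ℝ)) * c ^ 2 ≤ ((k:ℝ) + 1) * c ^ 2 := by nlinarith
        nlinarith
      have hbT : b - T' = (k:ℝ) + 1 := by rw [hbdef]; ring
      rw [hbT] at hg2
      linarith
    -- pigeonhole: one critical point is visited frequently
    have pigeon : ∃ p ∈ Z, ∃ᶠ t in atTop, dist (γ t) p < ε := by
      by_contra hcon
      push_neg at hcon
      have hev : ∀ᶠ t in atTop, ∀ p ∈ hZfin.toFinset, ¬ dist (γ t) p < ε := by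
        rw [Finset.eventually_all]
        intro p hp
        have h1 := hcon p (hZfin.mem_toFinset.mp hp)
        simp only [not_lt]
        exact h1
      obtain ⟨t, ⟨p, hp, hlt⟩, hall⟩ := (freq.and_eventually hev).exists
      exact hall p (hZfin.mem_toFinset.mpr hp) hlt
    obtain ⟨p, hpZ, hfreqp⟩ := pigeon
    obtain ⟨T, hT0, hesc⟩ := noesc p hpZ
    obtain ⟨s, hs, hsdist⟩ := (frequently_atTop.mp hfreqp) T
    refine ⟨p, hpZ, ?_⟩
    rw [eventually_atTop]
    exact ⟨s, fun t ht => hesc s t hs ht (le_of_lt hsdist)⟩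
  -- conclude
  obtain ⟨p₀, hp₀, hev₀⟩ := main (d / 5) (by positivity) (by linarith)
  refine ⟨p₀, ?_, hp₀.1⟩
  rw [Metric.tendsto_atTop]
  intro r hr
  set ε : ℝ := min (d / 5) (r / 3) with hεdef
  have hε : 0 < ε := lt_min (by positivity) (by positivity)
  have hεd : ε ≤ d / 5 := min_le_left _ _
  have hεr : ε ≤ r / 3 := min_le_right _ _
  obtain ⟨p, hpZ, hev⟩ := main ε hε (by linarith)
  have hpp : p = p₀ := by
    by_contra hne
    obtain ⟨t, h1, h2⟩ := (hev.and hev₀).exists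
    have h3 := hsep p hpZ p₀ hp₀ hne
    have h4 : dist p p₀ ≤ dist p (γ t) + dist (γ t) p₀ := dist_triangle _ _ _
    have h5 : dist p (γ t) = dist (γ t) p := dist_comm _ _
    linarith
  obtain ⟨N, hN⟩ := eventually_atTop.mp hev
  refine ⟨N, fun t ht => ?_⟩
  have := hN t ht
  rw [hpp] at this
  linarith
end
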